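/- Let $s_0, \ldots, s_{2n}, s_{2n+2}$ be reals such that $H_n = [s_{i+j}]_{i,j=0}^n$ is positive definite and $s_{2n+2} - w_n^T H_{n-1}^{-1} w_n > 0$, where $w_n^T = (s_{n+1},\ldots,s_{2n})$. Then there exists $s_{2n+1} \in \mathbb{R}$ such that the completed Hankel matrix $H_{n+1} = [s_{i+j}]_{i,j=0}^{n+1}$ is positive definite. In particular, $s_{2n+1} = v_{n-1}^T H_{n-1}^{-1} w_n$ works, where $v_{n-1}^T = (s_n, \ldots, s_{2n-1})$. -/

import Mathlib

/-! Put `A = H_{n-1}`, a principal submatrix of `H_n` and hence positive definite, and let `v`, `w`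
be the last two columns of `H_{n+1}` cut to their first `n` entries. After reindexing
`Fin (n + 2) ≃ Fin n ⊕ Fin 2`, `H_{n+1}` is the block matrix `[[A, [v w]], [[v w]ᵀ, D]]`, which is
positive definite iff its Schur complement
`[[s_{2n} - vᵀA⁻¹v, s_{2n+1} - vᵀA⁻¹w], [s_{2n+1} - wᵀA⁻¹v, s_{2n+2} - wᵀA⁻¹w]]` is.
The choice `s_{2n+1} = vᵀA⁻¹w` makes it diagonal; its first entry is positive because it is the
`1 × 1` Schur complement of `A` in `H_n`, and its second entry by hypothesis. -/

open Matrix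

/-- Hankel matrix of a sequence. -/
def hankelMatrix (s : ℕ → ℝ) (n : ℕ) : Matrix (Fin (n + 1)) (Fin (n + 1)) ℝ :=
  Matrix.of fun i j => s ((i : ℕ) + (j : ℕ))

namespace Matrix

variable {m n R : Type*}

theorem mul_mul_transpose_apply [Fintype m] [CommSemiring R] (C : Matrix n m R) (M : Matrix m m R)
    (j k : n) : (C * M * Cᵀ) j k = C j ⬝ᵥ M *ᵥ C k := by
  rw [Matrix.mul_assoc]
  simp [mul_apply, dotProduct, mulVec, Finset.mul_sum]

theorem posDef_submatrix_equiv [Ring R] [PartialOrder R] [StarRing R] {l : Type*}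
    {M : Matrix n n R} (e : l ≃ n) : (M.submatrix e e).PosDef ↔ M.PosDef :=
  ⟨fun h ↦ by simpa using h.submatrix e.symm.injective, fun h ↦ h.submatrix e.injective⟩

variable [Fintype m] [Fintype n] [CommRing R] [PartialOrder R] [StarRing R] [StarOrderedRing R]

theorem PosDef.posDef_fromBlocks₁₁_iff [DecidableEq m] {A : Matrix m m R} (B : Matrix m n R)
    (D : Matrix n n R) (hA : A.PosDef) [Invertible A] :
    (fromBlocks A B Bᴴ D).PosDef ↔ (D - Bᴴ * A⁻¹ * B).PosDef := by
  rw [posDef_iff_dotProduct_mulVec, posDef_iff_dotProduct_mulVec,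
    IsHermitian.fromBlocks₁₁ _ _ hA.1]
  refine and_congr_right fun _ ↦ ⟨fun h y hy ↦ ?_, fun h z hz ↦ ?_⟩
  · have := h (x := -((A⁻¹ * B) *ᵥ y) ⊕ᵥ y) fun h0 ↦ hy (by simpa using congrArg (· ∘ Sum.inr) h0)
    rwa [dotProduct_mulVec, schur_complement_eq₁₁ B D _ _ hA.1, neg_add_cancel, dotProduct_zero,
      zero_add, ← dotProduct_mulVec] at this
  · rw [dotProduct_mulVec, ← Sum.elim_comp_inl_inr z, schur_complement_eq₁₁ B D _ _ hA.1,
      ← dotProduct_mulVec, ← dotProduct_mulVec]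
    by_cases hy : z ∘ Sum.inr = 0
    · have hx : z ∘ Sum.inl ≠ 0 := fun hx ↦ hz <| by
        ext (i | i); exacts [congrFun hx i, congrFun hy i]
      simpa [hy] using hA.dotProduct_mulVec_pos hx
    · exact add_pos_of_nonneg_of_pos (hA.posSemidef.dotProduct_mulVec_nonneg _) (h hy)

end Matrix

section Hankel

variable {α : Type*}

/-- Indexed by its size rather than its last index, so that `hankel s 0` is the empty matrix
`H_{-1}` and `hankelMatrix s n = hankel s (n + 1)`. -/
def hankel (s : ℕ → α) (k : ℕ) : Matrix (Fin k) (Fin k) α :=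
  of fun i j => s (i + j)

@[simp]
theorem hankel_apply (s : ℕ → α) (k : ℕ) (i j : Fin k) : hankel s k i j = s (i + j) :=
  rfl

theorem hankel_submatrix_finSumFinEquiv (s : ℕ → α) (m k : ℕ) :
    (hankel s (m + k)).submatrix finSumFinEquiv finSumFinEquiv =
      fromBlocks (hankel s m) (of fun (j : Fin k) (i : Fin m) => s (m + j + i))ᵀ
        (of fun (j : Fin k) (i : Fin m) => s (m + j + i)) (hankel (fun l => s (2 * m + l)) k) := by
  ext (i | i) (j | j) <;> simp <;> congr 1 <;> omega

end Hankel

theorem sub_dotProduct_inv_mulVec_pos_of_posDef_hankel {s : ℕ → ℝ} {n : ℕ} (v : Fin n → ℝ)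
    (hv : ∀ i, v i = s (n + i)) (h : (hankel s (n + 1)).PosDef) :
    0 < s (2 * n) - v ⬝ᵥ (hankel s n)⁻¹ *ᵥ v := by
  have hA : (hankel s n).PosDef := h.submatrix (Fin.castSucc_injective n)
  let := hA.isUnit.invertible
  have hrow : (of fun (j : Fin 1) (i : Fin n) => s (n + j + i)) = of ![v] := by
    ext j i; fin_cases j; simp [hv]
  rw [← posDef_submatrix_equiv finSumFinEquiv, hankel_submatrix_finSumFinEquiv, hrow,
    ← conjTranspose_eq_transpose_of_trivial] at h
  have hS := (hA.posDef_fromBlocks₁₁_iff (of ![v])ᴴ _).mp (by rwa [conjTranspose_conjTranspose])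
  rw [conjTranspose_conjTranspose, conjTranspose_eq_transpose_of_trivial] at hS
  have hrow0 : of ![v] 0 = v := rfl
  have := hS.diag_pos (i := 0)
  rwa [Matrix.sub_apply, mul_mul_transpose_apply, hrow0, hankel_apply] at this

theorem posDef_hankel_update_of_schur_pos {s : ℕ → ℝ} {n : ℕ} (v w : Fin n → ℝ)
    (hv : ∀ i, v i = s (n + i)) (hw : ∀ i, w i = s (n + 1 + i)) (hA : (hankel s n).PosDef)
    (hvA : 0 < s (2 * n) - v ⬝ᵥ (hankel s n)⁻¹ *ᵥ v)
    (hwA : 0 < s (2 * n + 2) - w ⬝ᵥ (hankel s n)⁻¹ *ᵥ w) :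
    (hankel (Function.update s (2 * n + 1) (v ⬝ᵥ (hankel s n)⁻¹ *ᵥ w)) (n + 2)).PosDef := by
  set t := Function.update s (2 * n + 1) (v ⬝ᵥ (hankel s n)⁻¹ *ᵥ w)
  let := hA.isUnit.invertible
  have ht : ∀ l ≠ 2 * n + 1, t l = s l := fun l hl ↦ Function.update_of_ne hl _ _
  have htop : hankel t n = hankel s n := by
    ext i j; exact ht _ (by omega)
  have hrows : (of fun (j : Fin 2) (i : Fin n) => t (n + j + i)) = of ![v, w] := by
    ext j i; fin_cases j <;> simp (disch := omega) [ht, hv, hw]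
  have hsymm : w ⬝ᵥ (hankel s n)⁻¹ *ᵥ v = v ⬝ᵥ (hankel s n)⁻¹ *ᵥ w := by
    rw [dotProduct_mulVec, ← mulVec_transpose, ← conjTranspose_eq_transpose_of_trivial,
      hA.isHermitian.inv.eq, dotProduct_comm]
  have hschur : hankel (fun l => t (2 * n + l)) 2 - of ![v, w] * (hankel s n)⁻¹ * (of ![v, w])ᵀ =
      diagonal ![s (2 * n) - v ⬝ᵥ (hankel s n)⁻¹ *ᵥ v,
        s (2 * n + 2) - w ⬝ᵥ (hankel s n)⁻¹ *ᵥ w] := by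
    have hrow0 : of ![v, w] 0 = v := rfl
    have hrow1 : of ![v, w] 1 = w := rfl
    ext i j
    rw [Matrix.sub_apply, mul_mul_transpose_apply]
    fin_cases i <;> fin_cases j <;> simp (disch := omega) [hrow0, hrow1, t, hsymm]
  rw [← posDef_submatrix_equiv finSumFinEquiv, hankel_submatrix_finSumFinEquiv, htop, hrows,
    ← conjTranspose_eq_transpose_of_trivial]
  have hS := hA.posDef_fromBlocks₁₁_iff (of ![v, w])ᴴ (hankel (fun l => t (2 * n + l)) 2)
  rw [conjTranspose_conjTranspose, conjTranspose_eq_transpose_of_trivial, hschur] at hS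
  exact hS.mpr (PosDef.diagonal (Fin.forall_fin_two.2 ⟨hvA, hwA⟩))

theorem stmt_6_general (n : ℕ) (s : ℕ → ℝ)
    (w v : Fin n → ℝ) (hw : ∀ i, w i = s (n + 1 + (i : ℕ))) (hv : ∀ i, v i = s (n + (i : ℕ)))
    (hpd : (hankelMatrix s n).PosDef)
    (hschur : 0 < s (2 * n + 2)
        - w ⬝ᵥ (Matrix.of fun i j : Fin n => s ((i : ℕ) + (j : ℕ)))⁻¹ *ᵥ w) :
    (∃ x : ℝ, (Matrix.of fun i j : Fin (n + 2) =>
        if (i : ℕ) + (j : ℕ) = 2 * n + 1 then x else s ((i : ℕ) + (j : ℕ))).PosDef) ∧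
    (Matrix.of fun i j : Fin (n + 2) =>
        if (i : ℕ) + (j : ℕ) = 2 * n + 1 then
          v ⬝ᵥ (Matrix.of fun i j : Fin n => s ((i : ℕ) + (j : ℕ)))⁻¹ *ᵥ w
        else s ((i : ℕ) + (j : ℕ))).PosDef := by
  have hcompletion : ∀ x : ℝ, (of fun i j : Fin (n + 2) =>
      if (i : ℕ) + (j : ℕ) = 2 * n + 1 then x else s ((i : ℕ) + (j : ℕ))) =
      hankel (Function.update s (2 * n + 1) x) (n + 2) := by
    intro x; ext i j; simp [Function.update_apply]
  have hA : (hankel s n).PosDef := hpd.submatrix (Fin.castSucc_injective n)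
  have hvA := sub_dotProduct_inv_mulVec_pos_of_posDef_hankel v hv hpd
  have key := posDef_hankel_update_of_schur_pos v w hv hw hA hvA hschur
  rw [← hcompletion] at key
  exact ⟨⟨_, key⟩, key⟩

theorem stmt_6 (n : ℕ) (hn : 1 ≤ n) (s : ℕ → ℝ)
    (w v : Fin n → ℝ) (hw : ∀ i, w i = s (n + 1 + (i : ℕ))) (hv : ∀ i, v i = s (n + (i : ℕ)))
    (hpd : (hankelMatrix s n).PosDef)
    (hschur : 0 < s (2 * n + 2)
        - w ⬝ᵥ (Matrix.of fun i j : Fin n => s ((i : ℕ) + (j : ℕ)))⁻¹ *ᵥ w) :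
    (∃ x : ℝ, (Matrix.of fun i j : Fin (n + 2) =>
        if (i : ℕ) + (j : ℕ) = 2 * n + 1 then x else s ((i : ℕ) + (j : ℕ))).PosDef) ∧
    (Matrix.of fun i j : Fin (n + 2) =>
        if (i : ℕ) + (j : ℕ) = 2 * n + 1 then
          v ⬝ᵥ (Matrix.of fun i j : Fin n => s ((i : ℕ) + (j : ℕ)))⁻¹ *ᵥ w
        else s ((i : ℕ) + (j : ℕ))).PosDef :=
  stmt_6_general n s w v hw hv hpd hschur
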